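/- Let G be a finite prereduced graph, H a hole of G, and v a common neighbor of H. Then v is adjacent to every vertex of N[H] \ {v}. -/

import Mathlib

/-- A graph is an interval graph if each vertex can be assigned a (nonempty) closed real
interval such that two distinct vertices are adjacent iff their intervals intersect. -/
def IsIntervalGraph {V : Type*} (G : SimpleGraph V) : Prop :=
  ∃ f : V → Set ℝ,
    (∀ v, ∃ a b : ℝ, a ≤ b ∧ f v = Set.Icc a b) ∧
    ∀ u v : V, u ≠ v → (G.Adj u v ↔ (f u ∩ f v).Nonempty)

/-- A hole is an induced (chordless) cycle on at least 4 vertices, identified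
with its vertex set. -/
def IsHole {V : Type*} (G : SimpleGraph V) (H : Set V) : Prop :=
  ∃ m : ℕ, 4 ≤ m ∧ ∃ f : ZMod m → V,
    Function.Injective f ∧ Set.range f = H ∧
      ∀ i j : ZMod m, G.Adj (f i) (f j) ↔ (j = i + 1 ∨ i = j + 1)

/-- A minimal forbidden set: the induced subgraph is not interval, but every
proper subset induces an interval graph. -/
def IsMinimalForbidden {V : Type*} (G : SimpleGraph V) (X : Set V) : Prop :=
  ¬ IsIntervalGraph (G.induce X) ∧ ∀ Y : Set V, Y ⊂ X → IsIntervalGraph (G.induce Y)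

/-- A graph is prereduced if it has no minimal forbidden set of at most 10 vertices. -/
def Prereduced {V : Type*} (G : SimpleGraph V) : Prop :=
  ∀ X : Set V, X.ncard ≤ 10 → ¬ IsMinimalForbidden G X

/-- A module: any two vertices of `M` have exactly the same neighbors outside `M`. -/
def IsGraphModule {V : Type*} (G : SimpleGraph V) (M : Set V) : Prop :=
  ∀ u ∈ M, ∀ v ∈ M, ∀ x ∉ M, (G.Adj u x ↔ G.Adj v x)

/-- A graph is reduced if it is prereduced and every nontrivial module induces a clique. -/
def Reduced {V : Type*} [Fintype V] (G : SimpleGraph V) : Prop :=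
  Prereduced G ∧
    ∀ M : Set V, IsGraphModule G M → 1 < M.ncard → M.ncard < Fintype.card V →
      G.IsClique M

/-- Closed neighborhood `N[v]`. -/
def closedNbhd {V : Type*} (G : SimpleGraph V) (v : V) : Set V :=
  insert v (G.neighborSet v)

/-- Closed neighborhood of a set, `N[U] = ⋃ v ∈ U, N[v]`. -/
def closedNbhdSet {V : Type*} (G : SimpleGraph V) (U : Set V) : Set V :=
  ⋃ v ∈ U, closedNbhd G v

/-- The set of common neighbors of a vertex set `X`. -/
def commonNbrs {V : Type*} (G : SimpleGraph V) (X : Set V) : Set V :=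
  {v | ∀ x ∈ X, G.Adj v x}

/-- `P` induces a chordless path: it can be enumerated so that adjacency holds
exactly between consecutive vertices. -/
def IsInducedPath {V : Type*} (G : SimpleGraph V) (P : Set V) : Prop :=
  ∃ n : ℕ, ∃ f : Fin (n + 1) → V, Function.Injective f ∧ Set.range f = P ∧
    ∀ i j : Fin (n + 1), G.Adj (f i) (f j) ↔ (i.val + 1 = j.val ∨ j.val + 1 = i.val)

/-- A shallow terminal: a vertex `s` contained in a minimal forbidden set `W` that is
not a hole, such that `W \ N[s]` induces a chordless path. -/
def ShallowTerminal {V : Type*} (G : SimpleGraph V) (s : V) : Prop :=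
  ∃ W : Set V, IsMinimalForbidden G W ∧ s ∈ W ∧ ¬ IsHole G W ∧
    IsInducedPath G (W \ closedNbhd G s)

/-- A hole cover: a vertex set intersecting every hole. -/
def HoleCover {V : Type*} (G : SimpleGraph V) (C : Set V) : Prop :=
  ∀ H : Set V, IsHole G H → (C ∩ H).Nonempty

/-- A minimal hole cover: a hole cover no proper subset of which is a hole cover. -/
def MinimalHoleCover {V : Type*} (G : SimpleGraph V) (C : Set V) : Prop :=
  HoleCover G C ∧ ∀ C' : Set V, C' ⊂ C → ¬ HoleCover G C'

/-- An interval deletion set: a vertex set whose removal leaves an interval graph. -/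
def IntervalDeletionSet {V : Type*} (G : SimpleGraph V) (Q : Set V) : Prop :=
  IsIntervalGraph (G.induce Qᶜ)

/-- A minimum interval deletion set. -/
def MinIntervalDeletionSet {V : Type*} (G : SimpleGraph V) (Q : Set V) : Prop :=
  IntervalDeletionSet G Q ∧
    ∀ Q' : Set V, IntervalDeletionSet G Q' → Q.ncard ≤ Q'.ncard

/-- Two holes are congenial if each is contained in the closed neighborhood of the other. -/
def Congenial {V : Type*} (G : SimpleGraph V) (H₁ H₂ : Set V) : Prop :=
  H₁ ⊆ closedNbhdSet G H₂ ∧ H₂ ⊆ closedNbhdSet G H₁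

/-- The graph `G − S`: edges of `G` with both endpoints outside `S`
(vertices of `S` become isolated). -/
def deleteSet {V : Type*} (G : SimpleGraph V) (S : Set V) : SimpleGraph V where
  Adj u v := G.Adj u v ∧ u ∉ S ∧ v ∉ S
  symm := ⟨fun u v h => ⟨h.1.symm, h.2.2, h.2.1⟩⟩
  loopless := ⟨fun v h => G.loopless.irrefl v h.1⟩

/-!
A hole is not an interval graph: the vertex whose interval ends first would have two
nonadjacent neighbours with overlapping intervals. As every set of at most ten vertices of a
prereduced graph induces an interval graph, a hole has at least eleven vertices. If a neighbour
`u` of a hole vertex `h` missed the common neighbour `v`, take the induced path of five hole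
vertices centred at `h`. In an interval model of these seven vertices, the interval of `v` meets
those of both ends of the path, hence covers that of `h`, hence meets that of `u`.
-/

open Set Function

section IntervalArithmetic

variable {α : Type*} [LinearOrder α]

theorem Set.Icc_inter_Icc_nonempty_iff {a b c d : α} (hab : a ≤ b) (hcd : c ≤ d) :
    (Icc a b ∩ Icc c d).Nonempty ↔ a ≤ d ∧ c ≤ b := by
  rw [Icc_inter_Icc, nonempty_Icc]
  simp only [sup_le_iff, le_inf_iff]
  tauto

/-- With `Iₖ = [a k, b k]`: `I₁` and `I₃` cannot reach across `I₄` and `I₀`, so `I₂` lies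
between `I₀` and `I₄`. -/
theorem Icc_subset_of_meets_path_ends {a b : Fin 5 → α} (hab : ∀ k, a k ≤ b k)
    (h01 : a 0 ≤ b 1 ∧ a 1 ≤ b 0) (h12 : a 1 ≤ b 2 ∧ a 2 ≤ b 1)
    (h23 : a 2 ≤ b 3 ∧ a 3 ≤ b 2) (h34 : a 3 ≤ b 4 ∧ a 4 ≤ b 3)
    (h02 : b 0 < a 2 ∨ b 2 < a 0) (h03 : b 0 < a 3 ∨ b 3 < a 0) (h04 : b 0 < a 4 ∨ b 4 < a 0)
    (h14 : b 1 < a 4 ∨ b 4 < a 1) (h24 : b 2 < a 4 ∨ b 4 < a 2)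
    {c d : α} (h0 : c ≤ b 0 ∧ a 0 ≤ d) (h4 : c ≤ b 4 ∧ a 4 ≤ d) :
    Icc (a 2) (b 2) ⊆ Icc c d := by
  have := hab 0; have := hab 1; have := hab 2; have := hab 3; have := hab 4
  rcases h04 with h04 | h04
  · have h02' : b 0 < a 2 := h02.resolve_right fun h => by rcases h03 with h | h <;> order
    have h24' : b 2 < a 4 := h24.resolve_right fun h => by rcases h14 with h | h <;> order
    exact Icc_subset_Icc (by order) (by order)
  · have h02' : b 2 < a 0 := h02.resolve_left fun h => by rcases h03 with h | h <;> order
    have h24' : b 4 < a 2 := h24.resolve_left fun h => by rcases h14 with h | h <;> order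
    exact Icc_subset_Icc (by order) (by order)

end IntervalArithmetic

section IntervalGraph

variable {W : Type*} {G : SimpleGraph W}

theorem IsIntervalGraph.exists_endpoints (hG : IsIntervalGraph G) :
    ∃ a b : W → ℝ, (∀ x, a x ≤ b x) ∧
      ∀ x y, x ≠ y → (G.Adj x y ↔ a x ≤ b y ∧ a y ≤ b x) := by
  obtain ⟨F, hF, hadj⟩ := hG
  choose a b hab hFab using hF
  refine ⟨a, b, hab, fun x y hxy => ?_⟩
  rw [hadj x y hxy, hFab, hFab, Icc_inter_Icc_nonempty_iff (hab x) (hab y)]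

theorem IsIntervalGraph.exists_isClique_neighborSet [Finite W] [Nonempty W]
    (hG : IsIntervalGraph G) : ∃ x, G.IsClique (G.neighborSet x) := by
  obtain ⟨a, b, -, hadj⟩ := hG.exists_endpoints
  obtain ⟨x, hx⟩ := Finite.exists_min b
  refine ⟨x, fun y hy z hz hyz => (hadj y z hyz).2 ⟨?_, ?_⟩⟩
  · exact ((hadj x y hy.ne).1 hy).2.trans (hx z)
  · exact ((hadj x z hz.ne).1 hz).2.trans (hx y)

theorem IsIntervalGraph.adj_of_adj_path_center (hG : IsIntervalGraph G) {p : Fin 5 → W}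
    (hp : Injective p)
    (hpath : ∀ k l, G.Adj (p k) (p l) ↔ (k.val + 1 = l.val ∨ l.val + 1 = k.val))
    {u v : W} (hv₀ : G.Adj v (p 0)) (hv₄ : G.Adj v (p 4)) (hu : G.Adj u (p 2)) (huv : u ≠ v) :
    G.Adj u v := by
  obtain ⟨a, b, hab, hadj⟩ := hG.exists_endpoints
  have meets : ∀ k l : Fin 5, k.val + 1 = l.val → a (p k) ≤ b (p l) ∧ a (p l) ≤ b (p k) :=
    fun k l h => (hadj _ _ (hp.ne (by omega))).1 ((hpath k l).2 (Or.inl h))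
  have apart : ∀ k l : Fin 5, k.val + 1 < l.val → b (p k) < a (p l) ∨ b (p l) < a (p k) := by
    intro k l h
    have hkl : ¬ G.Adj (p k) (p l) := by rw [hpath]; omega
    rw [hadj _ _ (hp.ne (by omega)), not_and_or, not_le, not_le] at hkl
    exact hkl.symm
  have hmid := Icc_subset_of_meets_path_ends (a := a ∘ p) (b := b ∘ p) (fun k => hab (p k))
    (meets 0 1 rfl) (meets 1 2 rfl) (meets 2 3 rfl) (meets 3 4 rfl) (apart 0 2 (by decide))
    (apart 0 3 (by decide)) (apart 0 4 (by decide)) (apart 1 4 (by decide))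
    (apart 2 4 (by decide)) ((hadj _ _ hv₀.ne).1 hv₀) ((hadj _ _ hv₄.ne).1 hv₄)
  obtain ⟨hva, hbv⟩ := (Icc_subset_Icc_iff (hab (p 2))).1 hmid
  obtain ⟨hu₁, hu₂⟩ := (hadj _ _ hu.ne).1 hu
  exact (hadj u v huv).2 ⟨hu₁.trans hbv, hva.trans hu₂⟩

end IntervalGraph

section Hole

variable {V : Type*} {G : SimpleGraph V}

theorem ZMod.natCast_eq_natCast_iff_of_lt {m k l : ℕ} (hk : k < m) (hl : l < m) :
    (k : ZMod m) = l ↔ k = l := by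
  rw [ZMod.natCast_eq_natCast_iff', Nat.mod_eq_of_lt hk, Nat.mod_eq_of_lt hl]

theorem adj_add_natCast_iff_of_cycle {m : ℕ} {f : ZMod m → V}
    (hf : ∀ i j, G.Adj (f i) (f j) ↔ (j = i + 1 ∨ i = j + 1)) (i : ZMod m) {k l : ℕ}
    (hk : k + 1 < m) (hl : l + 1 < m) :
    G.Adj (f (i + k)) (f (i + l)) ↔ (k + 1 = l ∨ l + 1 = k) := by
  rw [hf, add_assoc, add_assoc, add_right_inj, add_right_inj, ← Nat.cast_one, ← Nat.cast_add,
    ← Nat.cast_add, ZMod.natCast_eq_natCast_iff_of_lt (by omega) hk,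
    ZMod.natCast_eq_natCast_iff_of_lt (by omega) hl]
  omega

theorem IsHole.finite {H : Set V} (hH : IsHole G H) : H.Finite := by
  obtain ⟨m, hm, f, -, rfl, -⟩ := hH
  have : NeZero m := ⟨by omega⟩
  exact finite_range f

theorem IsHole.not_isIntervalGraph_induce {H : Set V} (hH : IsHole G H) :
    ¬ IsIntervalGraph (G.induce H) := by
  obtain ⟨m, hm, f, hinj, rfl, hf⟩ := hH
  have : NeZero m := ⟨by omega⟩
  intro hint
  obtain ⟨⟨_, j, rfl⟩, hj⟩ := hint.exists_isClique_neighborSet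
  obtain ⟨i, rfl⟩ : ∃ i, j = i + ((1 : ℕ) : ZMod m) := ⟨j - 1, by simp⟩
  have hcyc k l (hk : k ≤ 2) (hl : l ≤ 2) := adj_add_natCast_iff_of_cycle hf i (k := k) (l := l)
    (by omega) (by omega)
  have hne : f (i + ((0 : ℕ) : ZMod m)) ≠ f (i + ((2 : ℕ) : ZMod m)) := by
    rw [hinj.ne_iff, Ne, add_right_inj, ZMod.natCast_eq_natCast_iff_of_lt (by omega) (by omega)]
    omega
  have := hj (x := ⟨_, _, rfl⟩) (y := ⟨_, _, rfl⟩) ((hcyc 1 0 (by omega) (by omega)).2 (by omega))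
    ((hcyc 1 2 (by omega) (by omega)).2 (by omega)) (Subtype.coe_ne_coe.1 hne)
  exact absurd ((hcyc 0 2 (by omega) (by omega)).1 this) (by omega)

end Hole

section Prereduced

variable {V : Type*} {G : SimpleGraph V}

theorem Prereduced.isIntervalGraph_induce (hG : Prereduced G) {X : Set V} (hX : X.Finite)
    (hX₁₀ : X.ncard ≤ 10) : IsIntervalGraph (G.induce X) := by
  obtain ⟨n, hn⟩ : ∃ n, X.ncard = n := ⟨_, rfl⟩
  induction n using Nat.strong_induction_on generalizing X with
  | _ n ih =>
    by_contra hXint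
    refine hG X hX₁₀ ⟨hXint, fun Y hYX => ?_⟩
    have hYn := ncard_lt_ncard hYX hX
    exact ih _ (hn ▸ hYn) (hX.subset hYX.subset) (by omega) rfl

theorem Prereduced.ten_lt_ncard_of_isHole (hG : Prereduced G) {H : Set V} (hH : IsHole G H) :
    10 < H.ncard := by
  by_contra h
  exact hH.not_isIntervalGraph_induce (hG.isIntervalGraph_induce hH.finite (by omega))

end Prereduced

theorem stmt_11_general {V : Type*} (G : SimpleGraph V) (hG : Prereduced G)
    (H : Set V) (hH : IsHole G H)
    (v : V) (hv : v ∈ commonNbrs G H) :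
    ∀ u ∈ closedNbhdSet G H, u ≠ v → G.Adj v u := by
  have hlen := hG.ten_lt_ncard_of_isHole hH
  obtain ⟨m, -, f, hinj, rfl, hf⟩ := hH
  rw [ncard_range_of_injective hinj, Nat.card_zmod] at hlen
  intro u hu huv
  simp only [closedNbhdSet, mem_iUnion₂, exists_prop, mem_range] at hu
  obtain ⟨_, ⟨j, rfl⟩, rfl | hju⟩ := hu
  · exact hv _ ⟨j, rfl⟩
  obtain ⟨i, rfl⟩ : ∃ i, j = i + ((2 : ℕ) : ZMod m) := ⟨j - 2, by simp⟩
  have hseg : Injective fun k : Fin 5 => f (i + k.val) := fun k l hkl =>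
    Fin.ext ((ZMod.natCast_eq_natCast_iff_of_lt (by omega) (by omega)).1
      (add_right_injective i (hinj hkl)))
  set X := insert u (insert v (range fun k : Fin 5 => f (i + k.val)))
  have hX : IsIntervalGraph (G.induce X) := by
    refine hG.isIntervalGraph_induce (toFinite X) ?_
    have := ncard_range_of_injective hseg
    grw [ncard_insert_le, ncard_insert_le, this, Nat.card_eq_fintype_card, Fintype.card_fin]
    norm_num
  let p (k : Fin 5) : X := ⟨f (i + k.val), by simp [X]⟩
  refine ((hX.adj_of_adj_path_center (p := p) (u := ⟨u, by simp [X]⟩) (v := ⟨v, by simp [X]⟩)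
    ?_ ?_ (hv _ ⟨_, rfl⟩) (hv _ ⟨_, rfl⟩) hju.symm (by simpa using huv))).symm
  · exact fun k l hkl => hseg (congrArg Subtype.val hkl)
  · exact fun k l => adj_add_natCast_iff_of_cycle hf i (by omega) (by omega)

/-- In a prereduced graph, a common neighbor of a hole `H` is adjacent to
every vertex of `N[H]` other than itself. -/
theorem stmt_11 {V : Type*} [Fintype V] (G : SimpleGraph V) (hG : Prereduced G)
    (H : Set V) (hH : IsHole G H)
    (v : V) (hv : v ∈ commonNbrs G H) :
    ∀ u ∈ closedNbhdSet G H, u ≠ v → G.Adj v u :=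
  stmt_11_general G hG H hH v hv
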